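/- Let b ∈ ℝ^m with |b(i)| ≤ 1 for all i and let q_* = Σ_{i=0}^m b''(i)·e_{ν_i} be the subvertex. For every ℓ-positive vector u, ⟨u⁺, q_*⟩ ≥ 0 and min{⟨u⁺, x⟩ : x ∈ P(b)} ≥ ⟨u⁺, q_*⟩. If moreover Σ_{i=1}^m b(i) ≤ 2 − m, then q_* ∈ P(b) and this inequality is an equality. -/

import Mathlib

open Finset

/-- The value λ(k) for λ ∈ Λ = {0,1}^m, extended by the conventions λ(0) = 0 and
λ(m+1) = 1 (positions 1,…,m carry the actual values of λ). -/
def lamExt (m : ℕ) (lam : Fin m → Bool) (k : ℕ) : ℕ :=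
  if h : 1 ≤ k ∧ k ≤ m then (if lam ⟨k - 1, by omega⟩ then 1 else 0)
  else if k = 0 then 0 else 1

/-- The vector ℓ_i ∈ ℝ^Λ, ℓ_i(λ) = (−1)^{λ(i)}, for 0 ≤ i ≤ m. -/
def ell (m : ℕ) (i : ℕ) (lam : Fin m → Bool) : ℝ := (-1) ^ lamExt m lam i

/-- The standard inner product on ℝ^Λ. -/
def ip (m : ℕ) (x y : (Fin m → Bool) → ℝ) : ℝ := ∑ lam : Fin m → Bool, x lam * y lam

/-- The polytope P(b). -/
def Pb (m : ℕ) (b : ℕ → ℝ) : Set ((Fin m → Bool) → ℝ) :=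
  {x | ip m (ell m 0) x = 1 ∧ (∀ i ∈ Finset.Icc 1 m, ip m (ell m i) x = b i) ∧
    ∀ lam, 0 ≤ x lam}

/-- b''(i) = (b(i)+1)/2 for 1 ≤ i ≤ m and b''(0) = 1 − Σ_{i=1}^m b''(i). -/
noncomputable def b'' (m : ℕ) (b : ℕ → ℝ) (i : ℕ) : ℝ :=
  if i = 0 then 1 - ∑ j ∈ Finset.Icc 1 m, (b j + 1) / 2 else (b i + 1) / 2

/-- ν_j ∈ Λ: ν_j(k) = 1 − δ_{jk}; in particular ν_0 = (1,…,1). -/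
def nu (m j : ℕ) : Fin m → Bool := fun k => decide ((k : ℕ) + 1 ≠ j)

/-- The subvertex q_* = Σ_{i=0}^m b''(i)·e_{ν_i}. -/
noncomputable def subvertex (m : ℕ) (b : ℕ → ℝ) : (Fin m → Bool) → ℝ :=
  fun lam => ∑ i ∈ Finset.range (m + 1), b'' m b i * (if lam = nu m i then 1 else 0)

/-- u is ℓ-positive if u = Σ_{i=0}^m a_i ℓ_i with a_1,…,a_m > 0. -/
def lpos (m : ℕ) (u : (Fin m → Bool) → ℝ) : Prop :=
  ∃ a : ℕ → ℝ, (∀ i ∈ Finset.Icc 1 m, 0 < a i) ∧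
    u = fun lam => ∑ i ∈ Finset.range (m + 1), a i * ell m i lam

/-- The truncation u⁺ = max{u(·), 0}. -/
noncomputable def truncPos (m : ℕ) (u : (Fin m → Bool) → ℝ) : (Fin m → Bool) → ℝ :=
  fun lam => max (u lam) 0

/-! Write `u = c + 2 ∑_{k : λ(k) = 0} a_{k+1}` with `c = a_0 − ∑ a_i`. The function
`w = c⁺ + ∑_{k : λ(k) = 0} ((c + 2 a_{k+1})⁺ − c⁺)` is a combination of the `ℓ_i`, lies below
`u⁺` because `t ↦ (c + t)⁺ − c⁺` is superadditive on `[0, ∞)`, and agrees with `u⁺` at the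
points `ν_i` carrying `q_*`. As `q_*` satisfies the linear constraints of `P(b)` for every `b`,
`⟨u⁺, q_*⟩ = ⟨w, q_*⟩ = ⟨w, x⟩ ≤ ⟨u⁺, x⟩` for `x ∈ P(b)`, and
`⟨w, q_*⟩ = c⁺ + ∑ ((c + 2 a_i)⁺ − c⁺) b''(i) ≥ 0`. The condition `∑ b(i) ≤ 2 − m` says exactly
`b''(0) ≥ 0`, i.e. `q_* ≥ 0`. -/

open Matrix

lemma max_add_add_max_add_le (c s t : ℝ) (hs : 0 ≤ s) (ht : 0 ≤ t) :
    max (c + s) 0 + max (c + t) 0 ≤ max (c + (s + t)) 0 + max c 0 := by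
  simp only [max_def]; split_ifs <;> linarith

lemma max_add_sum_sub_le {ι : Type*} (c : ℝ) (s : Finset ι) (t : ι → ℝ)
    (ht : ∀ i ∈ s, 0 ≤ t i) :
    max c 0 + ∑ i ∈ s, (max (c + t i) 0 - max c 0) ≤ max (c + ∑ i ∈ s, t i) 0 := by
  induction s using Finset.cons_induction with
  | empty => simp
  | cons j s hj ih =>
    rw [forall_mem_cons] at ht
    have := max_add_add_max_add_le c (t j) (∑ i ∈ s, t i) ht.1 (sum_nonneg ht.2)
    rw [sum_cons, sum_cons]
    linarith [ih ht.2]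

lemma sum_Icc_one_eq_sum_fin (m : ℕ) (f : ℕ → ℝ) :
    ∑ i ∈ Icc 1 m, f i = ∑ k : Fin m, f (k + 1) := by
  rw [Fin.sum_univ_eq_sum_range (fun i => f (i + 1)), ← Ico_add_one_right_eq_Icc,
    sum_Ico_eq_sum_range]
  simp [add_comm]

lemma ell_zero_apply (m : ℕ) (lam : Fin m → Bool) : ell m 0 lam = 1 := by
  simp [ell, lamExt]

lemma ell_succ_apply {m : ℕ} (k : Fin m) (lam : Fin m → Bool) :
    ell m (k + 1) lam = if lam k then -1 else 1 := by
  have hk : (⟨k + 1 - 1, by omega⟩ : Fin m) = k := Fin.ext (by simp)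
  simp only [ell, lamExt, dif_pos (show 1 ≤ (k : ℕ) + 1 ∧ (k : ℕ) + 1 ≤ m by omega), hk]
  split_ifs <;> simp

lemma ell_nu {m i : ℕ} (hi : i ∈ Icc 1 m) (j : ℕ) :
    ell m i (nu m j) = if i = j then 1 else -1 := by
  obtain ⟨k, rfl⟩ : ∃ k : Fin m, (k : ℕ) + 1 = i :=
    ⟨⟨i - 1, by grind⟩, by grind⟩
  rw [ell_succ_apply]
  by_cases h : (k : ℕ) + 1 = j <;> simp [nu, h]

lemma sum_ite_nu (m : ℕ) (f : ℕ → ℝ) {i : ℕ} (hi : i ∈ range (m + 1)) :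
    (∑ k : Fin m, if nu m i k then 0 else f (k + 1)) = if i = 0 then 0 else f i := by
  simp only [nu, decide_eq_true_eq, ite_not]
  split_ifs with h0
  · simp [h0]
  · obtain ⟨j, rfl⟩ := Nat.exists_eq_succ_of_ne_zero h0
    have hj : j < m := by simp at hi; omega
    rw [Fintype.sum_eq_single ⟨j, hj⟩ fun k hk => if_neg fun h => hk (Fin.ext (by simpa using h))]
    simp

lemma b''_of_ne_zero (m : ℕ) (b : ℕ → ℝ) {i : ℕ} (hi : i ≠ 0) : b'' m b i = (b i + 1) / 2 :=
  if_neg hi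

lemma sum_range_b'' (m : ℕ) (b : ℕ → ℝ) : ∑ i ∈ range (m + 1), b'' m b i = 1 := by
  rw [sum_range_succ', ← Fin.sum_univ_eq_sum_range (fun i => b'' m b (i + 1))]
  simp [b'', sum_Icc_one_eq_sum_fin]

lemma ip_subvertex (m : ℕ) (b : ℕ → ℝ) (y : (Fin m → Bool) → ℝ) :
    ip m y (subvertex m b) = ∑ i ∈ range (m + 1), b'' m b i * y (nu m i) := by
  simp only [ip, subvertex, mul_sum, mul_ite, mul_one, mul_zero]
  rw [sum_comm]
  refine sum_congr rfl fun i _ => ?_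
  simp [mul_comm]

lemma ip_subvertex_congr {m : ℕ} (b : ℕ → ℝ) {y z : (Fin m → Bool) → ℝ}
    (h : ∀ i ∈ range (m + 1), y (nu m i) = z (nu m i)) :
    ip m y (subvertex m b) = ip m z (subvertex m b) := by
  simp only [ip_subvertex]
  exact sum_congr rfl fun i hi => by rw [h i hi]

lemma ip_ell_zero_subvertex (m : ℕ) (b : ℕ → ℝ) : ip m (ell m 0) (subvertex m b) = 1 := by
  simp [ip_subvertex, ell_zero_apply, sum_range_b'']

lemma ip_ell_subvertex {m i : ℕ} (b : ℕ → ℝ) (hi : i ∈ Icc 1 m) :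
    ip m (ell m i) (subvertex m b) = b i := by
  have hterm : ∀ j ∈ range (m + 1),
      b'' m b j * ell m i (nu m j) = (if i = j then 2 * b'' m b j else 0) - b'' m b j := by
    intro j _; rw [ell_nu hi]; split_ifs <;> ring
  have him : i ∈ range (m + 1) := by simp at hi ⊢; omega
  rw [ip_subvertex, sum_congr rfl hterm, sum_sub_distrib, sum_ite_eq, if_pos him,
    sum_range_b'', b''_of_ne_zero m b (by simp at hi; omega)]
  ring

lemma b''_nonneg {m : ℕ} {b : ℕ → ℝ} (hb : ∀ i ∈ Icc 1 m, -1 ≤ b i)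
    (hsum : ∑ i ∈ Icc 1 m, b i ≤ 2 - m) {i : ℕ} (hi : i ∈ range (m + 1)) : 0 ≤ b'' m b i := by
  rcases eq_or_ne i 0 with rfl | hi0
  · have : ∑ j ∈ Icc 1 m, (b j + 1) / 2 = (∑ j ∈ Icc 1 m, b j + m) / 2 := by
      rw [← sum_div, sum_add_distrib, sum_const, Nat.card_Icc, nsmul_eq_mul]
      norm_num
    simp only [b'', if_pos, this]
    linarith
  · rw [b''_of_ne_zero m b hi0]
    linarith [hb i (by simp at hi ⊢; omega)]

lemma subvertex_mem_Pb {m : ℕ} {b : ℕ → ℝ} (hb : ∀ i ∈ Icc 1 m, -1 ≤ b i)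
    (hsum : ∑ i ∈ Icc 1 m, b i ≤ 2 - m) : subvertex m b ∈ Pb m b :=
  ⟨ip_ell_zero_subvertex m b, fun _ hi => ip_ell_subvertex b hi, fun _ =>
    sum_nonneg fun i hi => mul_nonneg (b''_nonneg hb hsum hi) (by split_ifs <;> norm_num)⟩

/-- The function `λ ↦ α + ∑_{k : λ(k) = 0} β (k + 1)` on `Λ`; these are exactly the linear
combinations of `ℓ_0, …, ℓ_m`. -/
noncomputable def cubeAffine (m : ℕ) (α : ℝ) (β : ℕ → ℝ) (lam : Fin m → Bool) : ℝ :=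
  α + ∑ k : Fin m, if lam k then 0 else β (k + 1)

lemma sum_range_mul_ell_eq_cubeAffine (m : ℕ) (a : ℕ → ℝ) :
    (fun lam => ∑ i ∈ range (m + 1), a i * ell m i lam) =
      cubeAffine m (a 0 - ∑ k : Fin m, a (k + 1)) (fun i => 2 * a i) := by
  funext lam
  have hterm (k : Fin m) :
      a (k + 1) * ell m (k + 1) lam = (if lam k then 0 else 2 * a (k + 1)) - a (k + 1) := by
    rw [ell_succ_apply]; split_ifs <;> ring
  rw [cubeAffine, sum_range_succ',
    ← Fin.sum_univ_eq_sum_range (fun i => a (i + 1) * ell m (i + 1) lam),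
    Fintype.sum_congr _ _ hterm, sum_sub_distrib, ell_zero_apply]
  ring

lemma cubeAffine_nu {m i : ℕ} (α : ℝ) (β : ℕ → ℝ) (hi : i ∈ range (m + 1)) :
    cubeAffine m α β (nu m i) = α + if i = 0 then 0 else β i := by
  rw [cubeAffine, sum_ite_nu m β hi]

lemma ip_cubeAffine {m : ℕ} {b : ℕ → ℝ} {x : (Fin m → Bool) → ℝ}
    (h0 : ip m (ell m 0) x = 1) (hI : ∀ i ∈ Icc 1 m, ip m (ell m i) x = b i)
    (α : ℝ) (β : ℕ → ℝ) :
    ip m (cubeAffine m α β) x = α + ∑ k : Fin m, β (k + 1) * b'' m b (k + 1) := by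
  have hdecomp : cubeAffine m α β =
      α • ell m 0 + ∑ k : Fin m, (β (k + 1) / 2) • (ell m 0 + ell m (k + 1)) := by
    funext lam
    simp only [cubeAffine, Pi.add_apply, Pi.smul_apply, Finset.sum_apply, smul_eq_mul,
      ell_zero_apply, ell_succ_apply]
    congr 1
    · ring
    · exact Fintype.sum_congr _ _ fun k => by split_ifs <;> ring
  have hk (k : Fin m) : ip m (ell m (k + 1)) x = b (k + 1) := hI _ (by simp)
  change cubeAffine m α β ⬝ᵥ x = _
  simp only [hdecomp, add_dotProduct, sum_dotProduct, smul_dotProduct]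
  change α • ip m (ell m 0) x + ∑ k : Fin m, (β (k + 1) / 2) • (ip m (ell m 0) x + ip m _ x) = _
  simp only [h0, hk, smul_eq_mul, b''_of_ne_zero m b (Nat.succ_ne_zero _)]
  congr 1
  · ring
  · exact Fintype.sum_congr _ _ fun k => by ring

lemma cubeAffine_le_max {m : ℕ} (c : ℝ) {t : ℕ → ℝ} (ht : ∀ i ∈ Icc 1 m, 0 ≤ t i)
    (lam : Fin m → Bool) :
    cubeAffine m (max c 0) (fun i => max (c + t i) 0 - max c 0) lam ≤
      max (cubeAffine m c t lam) 0 := by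
  have key := max_add_sum_sub_le c univ (fun k : Fin m => if lam k then 0 else t (k + 1))
    fun k _ => by split_ifs; exacts [le_rfl, ht _ (by simp)]
  simp only [cubeAffine]
  convert key using 2
  exact Fintype.sum_congr _ _ fun k => by split_ifs <;> simp

theorem stmt17_general (m : ℕ) (b : ℕ → ℝ)
    (hb : ∀ i ∈ Finset.Icc 1 m, |b i| ≤ 1)
    (u : (Fin m → Bool) → ℝ) (hu : lpos m u) :
    0 ≤ ip m (truncPos m u) (subvertex m b) ∧
    (∀ x ∈ Pb m b, ip m (truncPos m u) (subvertex m b) ≤ ip m (truncPos m u) x) ∧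
    (∑ i ∈ Finset.Icc 1 m, b i ≤ 2 - m →
      subvertex m b ∈ Pb m b ∧
      IsLeast ((fun x => ip m (truncPos m u) x) '' Pb m b)
        (ip m (truncPos m u) (subvertex m b))) := by
  obtain ⟨a, ha, rfl⟩ := hu
  rw [sum_range_mul_ell_eq_cubeAffine]
  set c := a 0 - ∑ k : Fin m, a (k + 1)
  set w := cubeAffine m (max c 0) (fun i => max (c + 2 * a i) 0 - max c 0)
  have hb' : ∀ i ∈ Icc 1 m, -1 ≤ b i := fun i hi => (abs_le.mp (hb i hi)).1
  have hw_le : w ≤ truncPos m (cubeAffine m c fun i => 2 * a i) :=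
    cubeAffine_le_max c fun i hi => by linarith [ha i hi]
  have hq : ip m (truncPos m (cubeAffine m c fun i => 2 * a i)) (subvertex m b) =
      ip m w (subvertex m b) := by
    refine ip_subvertex_congr b fun i hi => ?_
    simp only [truncPos, w, cubeAffine_nu _ _ hi]
    split_ifs <;> simp
  have hqx : ∀ x ∈ Pb m b, ip m w (subvertex m b) = ip m w x := fun x ⟨h0, hI, _⟩ => by
    rw [ip_cubeAffine (ip_ell_zero_subvertex m b) (fun i hi => ip_ell_subvertex b hi),
      ip_cubeAffine h0 hI]
  have hmin : ∀ x ∈ Pb m b, ip m w (subvertex m b) ≤ ip m (truncPos m _) x :=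
    fun x hx => (hqx x hx).trans_le (dotProduct_le_dotProduct_of_nonneg_right hw_le hx.2.2)
  refine ⟨?_, fun x hx => hq ▸ hmin x hx, fun hsum => ?_⟩
  · rw [hq, ip_cubeAffine (ip_ell_zero_subvertex m b) (fun i hi => ip_ell_subvertex b hi)]
    have hterm (k : Fin m) : 0 ≤ (max (c + 2 * a (k + 1)) 0 - max c 0) * b'' m b (k + 1) := by
      have hk : (k : ℕ) + 1 ∈ Icc 1 m := by simp
      rw [b''_of_ne_zero m b (Nat.succ_ne_zero _)]
      exact mul_nonneg (sub_nonneg.mpr (max_le_max_right 0 (by linarith [ha _ hk])))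
        (by linarith [hb' _ hk])
    exact add_nonneg (le_max_right c 0) (sum_nonneg fun k _ => hterm k)
  · have hmem := subvertex_mem_Pb hb' hsum
    exact ⟨hmem, ⟨_, hmem, rfl⟩, by rintro _ ⟨x, hx, rfl⟩; exact hq ▸ hmin x hx⟩

/-- For ℓ-positive u: ⟨u⁺, q_*⟩ ≥ 0, the minimum of ⟨u⁺, x⟩ over P(b) is at least
⟨u⁺, q_*⟩, and if Σ b(i) ≤ 2 − m then q_* ∈ P(b) and ⟨u⁺, q_*⟩ is this minimum. -/
theorem stmt17 (m : ℕ) (hm : 1 ≤ m) (b : ℕ → ℝ)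
    (hb : ∀ i ∈ Finset.Icc 1 m, |b i| ≤ 1)
    (u : (Fin m → Bool) → ℝ) (hu : lpos m u) :
    0 ≤ ip m (truncPos m u) (subvertex m b) ∧
    (∀ x ∈ Pb m b, ip m (truncPos m u) (subvertex m b) ≤ ip m (truncPos m u) x) ∧
    (∑ i ∈ Finset.Icc 1 m, b i ≤ 2 - m →
      subvertex m b ∈ Pb m b ∧
      IsLeast ((fun x => ip m (truncPos m u) x) '' Pb m b)
        (ip m (truncPos m u) (subvertex m b))) :=
  stmt17_general m b hb u hu
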